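/- arXiv:2311.17030 — 3 statements merged into one kernel-verified Lean document; each statement's English description precedes it below -/
import Mathlib

section
/- Let v_disc, v_dorm ∈ ℝ^n be orthogonal unit vectors, W : ℝ^n → ℝ^m linear with W v_disc = 0, and act_A, act_B ∈ ℝ^n with v_dormᵀ act_A = v_dormᵀ act_B. Set v = (v_disc + v_dorm)/√2 and act_B' = act_B + ((vᵀ act_A) - (vᵀ act_B)) • v. Then W act_B' = W act_B + (1/2) • (v_discᵀ act_A - v_discᵀ act_B) • (W v_dorm). -/
open Matrix

/-- Activation patching of `b` towards `a` along the direction `v`. -/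
def patch {R ι : Type*} [CommRing R] [Fintype ι] (v a b : ι → R) : ι → R :=
  b + (v ⬝ᵥ a - v ⬝ᵥ b) • v

section PatchingIllusion

variable {R ι κ : Type*} [CommRing R] [Fintype ι]

theorem smul_add_dotProduct_sub_of_dotProduct_eq {u w a b : ι → R} (c : R)
    (heq : w ⬝ᵥ a = w ⬝ᵥ b) :
    (c • (u + w)) ⬝ᵥ a - (c • (u + w)) ⬝ᵥ b = c * (u ⬝ᵥ a - u ⬝ᵥ b) := by
  simp only [smul_dotProduct, add_dotProduct, smul_eq_mul, heq]
  ring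

theorem mulVec_smul_add_of_mulVec_eq_zero {W : Matrix κ ι R} {u : ι → R} (w : ι → R) (c : R)
    (hker : W *ᵥ u = 0) : W *ᵥ (c • (u + w)) = c • W *ᵥ w := by
  rw [mulVec_smul, mulVec_add, hker, zero_add]

/-- The dormant component `w` drops out of the patching coefficient, the disconnected component
`u` drops out after applying `W`: what survives is `u`'s variation driving `W w`. -/
theorem mulVec_patch_smul_add {W : Matrix κ ι R} {u w a b : ι → R} (c : R)
    (hker : W *ᵥ u = 0) (heq : w ⬝ᵥ a = w ⬝ᵥ b) :
    W *ᵥ patch (c • (u + w)) a b = W *ᵥ b + (c * c * (u ⬝ᵥ a - u ⬝ᵥ b)) • W *ᵥ w := by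
  rw [patch, mulVec_add, mulVec_smul, smul_add_dotProduct_sub_of_dotProduct_eq c heq,
    mulVec_smul_add_of_mulVec_eq_zero w c hker, smul_smul, mul_right_comm]

end PatchingIllusion

theorem stmt_2_general {n m : ℕ} (W : Matrix (Fin m) (Fin n) ℝ)
    (v_disc v_dorm act_A act_B : Fin n → ℝ)
    (hker : W.mulVec v_disc = 0)
    (heq : v_dorm ⬝ᵥ act_A = v_dorm ⬝ᵥ act_B) :
    let v := (Real.sqrt 2)⁻¹ • (v_disc + v_dorm)
    let act_B' := act_B + ((v ⬝ᵥ act_A) - (v ⬝ᵥ act_B)) • v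
    W.mulVec act_B' =
      W.mulVec act_B + ((1 / 2) * (v_disc ⬝ᵥ act_A - v_disc ⬝ᵥ act_B)) • W.mulVec v_dorm := by
  have hsq : (Real.sqrt 2)⁻¹ * (Real.sqrt 2)⁻¹ = 1 / 2 := by
    rw [← mul_inv, Real.mul_self_sqrt zero_le_two, one_div]
  rw [← hsq]
  exact mulVec_patch_smul_add _ hker heq

theorem stmt_2 {n m : ℕ} (W : Matrix (Fin m) (Fin n) ℝ)
    (v_disc v_dorm act_A act_B : Fin n → ℝ)
    (hdisc : v_disc ⬝ᵥ v_disc = 1) (hdorm : v_dorm ⬝ᵥ v_dorm = 1)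
    (horth : v_disc ⬝ᵥ v_dorm = 0)
    (hker : W.mulVec v_disc = 0)
    (heq : v_dorm ⬝ᵥ act_A = v_dorm ⬝ᵥ act_B) :
    let v := (Real.sqrt 2)⁻¹ • (v_disc + v_dorm)
    let act_B' := act_B + ((v ⬝ᵥ act_A) - (v ⬝ᵥ act_B)) • v
    W.mulVec act_B' =
      W.mulVec act_B + ((1 / 2) * (v_disc ⬝ᵥ act_A - v_disc ⬝ᵥ act_B)) • W.mulVec v_dorm :=
  stmt_2_general W v_disc v_dorm act_A act_B hker heq
end

section
/- Let Σ ∈ ℝ^{n×n} be positive definite, k ∈ ℝ^n nonzero, W ∈ ℝ^{m×n}, and v ∈ ℝ^m. Among all rank-1 updates W' = W + a bᵀ with a ∈ ℝ^m, b ∈ ℝ^n satisfying W' k = v, the choice a = v - W k and b = (Σ⁻¹ k)/(kᵀ Σ⁻¹ k) minimizes trace(Cov_{x ~ N(0,Σ)}[a bᵀ x]) = ‖a‖₂² · (bᵀ Σ b). -/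
/-!
Any admissible update satisfies `(bᵀk) a = v - W k = a₀`, so `‖a₀‖² = (bᵀk)² ‖a‖²`. Writing
`bᵀk = bᵀ Σ (Σ⁻¹ k)`, Cauchy–Schwarz for the inner product `⟨x, y⟩ = xᵀ Σ y` gives
`(bᵀk)² ≤ (bᵀ Σ b) (kᵀ Σ⁻¹ k)`, while `b₀` has `b₀ᵀk = 1` and `b₀ᵀ Σ b₀ = (kᵀ Σ⁻¹ k)⁻¹`.
-/

open Matrix

variable {ι : Type*} [Fintype ι]

theorem Matrix.mulVec_nonsing_inv_mulVec [DecidableEq ι] {R : Type*} [CommRing R]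
    {A : Matrix ι ι R} (hA : IsUnit A.det) (x : ι → R) : A *ᵥ (A⁻¹ *ᵥ x) = x := by
  rw [mulVec_mulVec, mul_nonsing_inv _ hA, one_mulVec]

theorem Matrix.add_vecMulVec_mulVec {κ R : Type*} [CommSemiring R]
    (W : Matrix κ ι R) (a : κ → R) (b k : ι → R) :
    (W + vecMulVec a b) *ᵥ k = W *ᵥ k + (b ⬝ᵥ k) • a := by
  rw [add_mulVec, vecMulVec_mulVec, op_smul_eq_smul]

theorem Matrix.IsHermitian.dotProduct_mulVec_comm {R : Type*} [CommSemiring R] [StarRing R]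
    [TrivialStar R] {S : Matrix ι ι R} (hS : S.IsHermitian) (x y : ι → R) :
    y ⬝ᵥ S *ᵥ x = x ⬝ᵥ S *ᵥ y := by
  rw [dotProduct_mulVec, ← mulVec_transpose, ← conjTranspose_eq_transpose_of_trivial, hS.eq,
    dotProduct_comm]

theorem Matrix.PosSemidef.dotProduct_mulVec_sq_le {R : Type*} [CommRing R] [LinearOrder R]
    [IsStrictOrderedRing R] [StarRing R] [TrivialStar R] {S : Matrix ι ι R} (hS : S.PosSemidef)
    (x y : ι → R) : (x ⬝ᵥ S *ᵥ y) ^ 2 ≤ (x ⬝ᵥ S *ᵥ x) * (y ⬝ᵥ S *ᵥ y) := by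
  classical
  have h := LinearMap.BilinForm.apply_mul_apply_le_of_forall_zero_le (S.toLinearMap₂' R)
    (fun z ↦ by simpa [toLinearMap₂'_apply'] using hS.dotProduct_mulVec_nonneg z) x y
  simp only [toLinearMap₂'_apply'] at h
  rwa [hS.isHermitian.dotProduct_mulVec_comm x y, ← sq] at h

theorem Matrix.PosDef.dotProduct_sq_le_mul_inv [DecidableEq ι] {K : Type*} [Field K]
    [LinearOrder K] [IsStrictOrderedRing K] [StarRing K] [TrivialStar K] {S : Matrix ι ι K}
    (hS : S.PosDef) (b k : ι → K) : (b ⬝ᵥ k) ^ 2 ≤ (b ⬝ᵥ S *ᵥ b) * (k ⬝ᵥ S⁻¹ *ᵥ k) := by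
  have h := hS.posSemidef.dotProduct_mulVec_sq_le b (S⁻¹ *ᵥ k)
  rwa [mulVec_nonsing_inv_mulVec ((isUnit_iff_isUnit_det S).mp hS.isUnit),
    dotProduct_comm (S⁻¹ *ᵥ k)] at h

theorem stmt_6 {n m : ℕ} (Sg : Matrix (Fin n) (Fin n) ℝ) (hS : Sg.PosDef)
    (k : Fin n → ℝ) (hk : k ≠ 0)
    (W : Matrix (Fin m) (Fin n) ℝ) (v : Fin m → ℝ) :
    let a₀ : Fin m → ℝ := v - W.mulVec k
    let b₀ : Fin n → ℝ := (k ⬝ᵥ Sg⁻¹.mulVec k)⁻¹ • Sg⁻¹.mulVec k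
    ((W + vecMulVec a₀ b₀).mulVec k = v) ∧
    (∀ (a : Fin m → ℝ) (b : Fin n → ℝ), (W + vecMulVec a b).mulVec k = v →
      (a₀ ⬝ᵥ a₀) * (b₀ ⬝ᵥ Sg.mulVec b₀) ≤ (a ⬝ᵥ a) * (b ⬝ᵥ Sg.mulVec b)) := by
  intro a₀ b₀
  set c := k ⬝ᵥ Sg⁻¹ *ᵥ k
  have hc : 0 < c := by simpa using hS.inv.dotProduct_mulVec_pos hk
  have hb₀k : b₀ ⬝ᵥ k = 1 := by
    rw [smul_dotProduct, dotProduct_comm _ k, smul_eq_mul, inv_mul_cancel₀ hc.ne']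
  have hb₀Sb₀ : b₀ ⬝ᵥ Sg *ᵥ b₀ = c⁻¹ := by
    rw [mulVec_smul, mulVec_nonsing_inv_mulVec ((isUnit_iff_isUnit_det Sg).mp hS.isUnit),
      dotProduct_smul, hb₀k, smul_eq_mul, mul_one]
  refine ⟨by rw [add_vecMulVec_mulVec, hb₀k, one_smul, add_sub_cancel], fun a b hab ↦ ?_⟩
  have ha₀ : a₀ = (b ⬝ᵥ k) • a := by
    rw [add_vecMulVec_mulVec] at hab
    rw [show a₀ = v - W *ᵥ k from rfl, ← hab, add_sub_cancel_left]
  calc (a₀ ⬝ᵥ a₀) * (b₀ ⬝ᵥ Sg *ᵥ b₀) = (a ⬝ᵥ a) * ((b ⬝ᵥ k) ^ 2 / c) := by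
        rw [ha₀, hb₀Sb₀, smul_dotProduct, dotProduct_smul, smul_eq_mul, smul_eq_mul]; ring
    _ ≤ (a ⬝ᵥ a) * (b ⬝ᵥ Sg *ᵥ b) := by
        gcongr
        · exact dotProduct_self_star_nonneg a
        · exact (div_le_iff₀ hc).mpr (hS.dotProduct_sq_le_mul_inv b k)
end

section
/- Let v ∈ ℝ^n be a unit vector, W ∈ ℝ^{m×n}, and suppose the row-space component v_row of v (orthogonal projection onto (ker W)⊥) satisfies v_rowᵀ act_A = v_rowᵀ act_B for given act_A, act_B ∈ ℝ^n. Then patching along the normalized direction v_row/‖v_row‖ (assuming v_row ≠ 0) from act_A into act_B leaves the MLP output W act_B unchanged, while patching along v changes the output by (v_nullᵀ(act_A - act_B)) • (W v_row), where v_null = v - v_row. -/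
/-! Patching `b` by `a` along `d` moves `b` by `(d ⬝ᵥ (a - b)) • d`, so its effect is governed
by the scalar `d ⬝ᵥ (a - b)`. Along the normalized row-space direction this
scalar vanishes by dormancy, so nothing moves. Along `v` it equals `v_null ⬝ᵥ (a - b)`, while the
displacement `v` is seen by `W` only through `W v = W v_row`. -/

open Matrix

namespace Matrix

variable {m n : Type*} [Fintype n]

/-- Activation patching of `b` by `a` along the direction `d`. -/
def patch (d a b : n → ℝ) : n → ℝ :=
  b + (d ⬝ᵥ (a - b)) • d

theorem patch_eq_right_of_dotProduct_eq {d a b : n → ℝ} (h : d ⬝ᵥ a = d ⬝ᵥ b) :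
    patch d a b = b := by
  rw [patch, dotProduct_sub, h, sub_self, zero_smul, add_zero]

theorem patch_smul_eq_right_of_dotProduct_eq {d a b : n → ℝ} (c : ℝ) (h : d ⬝ᵥ a = d ⬝ᵥ b) :
    patch (c • d) a b = b :=
  patch_eq_right_of_dotProduct_eq (by rw [smul_dotProduct, smul_dotProduct, h])

theorem mulVec_patch_sub (W : Matrix m n ℝ) (d a b : n → ℝ) :
    W *ᵥ patch d a b - W *ᵥ b = (d ⬝ᵥ (a - b)) • W *ᵥ d := by
  rw [patch, mulVec_add, mulVec_smul, add_sub_cancel_left]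

end Matrix

theorem stmt_19_general {n m : ℕ} (W : Matrix (Fin m) (Fin n) ℝ)
    (v v_null v_row act_A act_B : Fin n → ℝ)
    (hdecomp : v = v_null + v_row)
    (hnull : W.mulVec v_null = 0)
    (hdormant : v_row ⬝ᵥ act_A = v_row ⬝ᵥ act_B) :
    let vr := (Real.sqrt (v_row ⬝ᵥ v_row))⁻¹ • v_row
    (W.mulVec (act_B + (vr ⬝ᵥ (act_A - act_B)) • vr) = W.mulVec act_B) ∧
    (W.mulVec (act_B + (v ⬝ᵥ (act_A - act_B)) • v) - W.mulVec act_B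
      = (v_null ⬝ᵥ (act_A - act_B)) • W.mulVec v_row) := by
  intro vr
  have hrow : v_row ⬝ᵥ (act_A - act_B) = 0 := by rw [dotProduct_sub, hdormant, sub_self]
  have hWv : W *ᵥ v = W *ᵥ v_row := by rw [hdecomp, mulVec_add, hnull, zero_add]
  have hcoef : v ⬝ᵥ (act_A - act_B) = v_null ⬝ᵥ (act_A - act_B) := by
    rw [hdecomp, add_dotProduct, hrow, add_zero]
  refine ⟨congrArg (W *ᵥ ·) (patch_smul_eq_right_of_dotProduct_eq _ hdormant), ?_⟩
  rw [← hcoef, ← hWv]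
  exact mulVec_patch_sub W v act_A act_B

theorem stmt_19 {n m : ℕ} (W : Matrix (Fin m) (Fin n) ℝ)
    (v v_null v_row act_A act_B : Fin n → ℝ) (hv : v ⬝ᵥ v = 1)
    (hdecomp : v = v_null + v_row)
    (hnull : W.mulVec v_null = 0)
    (hrowperp : ∀ u : Fin n → ℝ, W.mulVec u = 0 → v_row ⬝ᵥ u = 0)
    (hrowne : v_row ≠ 0)
    (hdormant : v_row ⬝ᵥ act_A = v_row ⬝ᵥ act_B) :
    let vr := (Real.sqrt (v_row ⬝ᵥ v_row))⁻¹ • v_row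
    (W.mulVec (act_B + (vr ⬝ᵥ (act_A - act_B)) • vr) = W.mulVec act_B) ∧
    (W.mulVec (act_B + (v ⬝ᵥ (act_A - act_B)) • v) - W.mulVec act_B
      = (v_null ⬝ᵥ (act_A - act_B)) • W.mulVec v_row) :=
  stmt_19_general W v v_null v_row act_A act_B hdecomp hnull hdormant
end
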